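/- Every group G fitting in an extension 0 → A_4 → G → Z_2 → 0 such that G has no subgroup isomorphic to Z_2 × Z_2 × Z_2 is isomorphic to S_4. -/
import Mathlib

open Equiv Pointwise

private def r₁ : Equiv.Perm (Fin 4) := Equiv.swap 0 1 * Equiv.swap 0 2
private def r₂ : Equiv.Perm (Fin 4) := Equiv.swap 0 1 * Equiv.swap 0 3
private def v₁ : Equiv.Perm (Fin 4) := Equiv.swap 0 1 * Equiv.swap 2 3
private def v₂ : Equiv.Perm (Fin 4) := Equiv.swap 0 2 * Equiv.swap 1 3

private lemma keyA : ∀ p : Equiv.Perm (Fin 4), Equiv.Perm.sign p = 1 →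
    (p * r₁ * p⁻¹ = 1 ∨ p * r₁ * p⁻¹ = r₁ ∨ p * r₁ * p⁻¹ = r₁ ^ 2) →
    (p * r₂ * p⁻¹ = 1 ∨ p * r₂ * p⁻¹ = r₂ ∨ p * r₂ * p⁻¹ = r₂ ^ 2) → p = 1 := by decide

private def homOfInvolution {G : Type*} [Group G] (t : G) (ht : t ^ 2 = 1) :
    Multiplicative (ZMod 2) →* G where
  toFun x := t ^ (Multiplicative.toAdd x).val
  map_one' := by simp
  map_mul' x y := by
    have hmod : ∀ n : ℕ, t ^ (n % 2) = t ^ n := fun n => by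
      conv_rhs => rw [← Nat.div_add_mod n 2, pow_add, pow_mul, ht, one_pow, one_mul]
    show t ^ ((Multiplicative.toAdd x + Multiplicative.toAdd y).val) = _
    rw [ZMod.val_add, hmod, pow_add]

private lemma mem_zpowers_cases {G : Type*} [Group G] {g x : G} (h3 : g ^ 3 = 1)
    (hx : x ∈ Subgroup.zpowers g) : x = 1 ∨ x = g ∨ x = g ^ 2 := by
  obtain ⟨k, hk⟩ := hx
  have key : g ^ (k % 3) = g ^ k := by
    conv_rhs => rw [← Int.emod_add_mul_ediv k 3]
    rw [zpow_add, zpow_mul, show ((3:ℤ)) = ((3:ℕ):ℤ) by norm_num, zpow_natCast, h3,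
      one_zpow, mul_one]
  simp only at hk
  rw [← hk, ← key]
  have h0 : k % 3 = 0 ∨ k % 3 = 1 ∨ k % 3 = 2 := by omega
  rcases h0 with h | h | h <;> rw [h]
  · left; exact zpow_zero g
  · right; left; exact zpow_one g
  · right; right; rw [show ((2:ℤ)) = ((2:ℕ):ℤ) by norm_num, zpow_natCast]

/-- Every group `G` fitting in an extension `0 → A_4 → G → Z_2 → 0` and having no
subgroup isomorphic to `Z_2 × Z_2 × Z_2` is isomorphic to `S_4`. -/
theorem extension_a4_by_z2_is_s4
    (G : Type*) [Group G]
    (i : alternatingGroup (Fin 4) →* G) (π : G →* Multiplicative (ZMod 2))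
    (hi : Function.Injective i) (hπ : Function.Surjective π)
    (hexact : i.range = π.ker)
    (hno : ¬ ∃ H : Subgroup G,
      Nonempty (H ≃* Multiplicative (ZMod 2 × ZMod 2 × ZMod 2))) :
    Nonempty (G ≃* Equiv.Perm (Fin 4)) := by
  classical
  have fact3 : Fact (Nat.Prime 3) := ⟨by norm_num⟩
  -- finiteness of G
  have hfinker : Finite π.ker := by
    rw [← hexact]
    exact Finite.of_equiv _ (MonoidHom.ofInjective hi).toEquiv
  have hfinQ : Finite (G ⧸ π.ker) :=
    Finite.of_equiv _ (QuotientGroup.quotientKerEquivOfSurjective π hπ).symm.toEquiv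
  have hfinG : Finite G :=
    Finite.of_equiv _ (Subgroup.groupEquivQuotientProdSubgroup (s := π.ker)).symm
  -- cardinalities
  have cardA4 : Nat.card (alternatingGroup (Fin 4)) = 12 := by
    rw [Nat.card_eq_fintype_card]; decide
  have cardN : Nat.card i.range = 12 := by
    rw [← Nat.card_congr (MonoidHom.ofInjective hi).toEquiv]; exact cardA4
  have cardQ : Nat.card (G ⧸ π.ker) = 2 := by
    rw [Nat.card_congr (QuotientGroup.quotientKerEquivOfSurjective π hπ).toEquiv]
    simp [Nat.card_eq_fintype_card]
  have cardG : Nat.card G = 24 := by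
    rw [Subgroup.card_eq_card_quotient_mul_card_subgroup π.ker, cardQ, ← hexact, cardN]
  have hfact24 : (Nat.card G).factorization 3 = 1 := by
    rw [cardG, show (24:ℕ) = 8 * 3 by norm_num,
      Nat.factorization_mul (by norm_num) (by norm_num), Finsupp.add_apply,
      Nat.factorization_eq_zero_of_not_dvd (by norm_num),
      Nat.Prime.factorization Nat.prime_three, Finsupp.single_eq_same]
  -- the two 3-cycles and two Klein involutions, as elements of the image of A4
  have hr₁mem : r₁ ∈ alternatingGroup (Fin 4) := by
    rw [Equiv.Perm.mem_alternatingGroup]; decide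
  have hr₂mem : r₂ ∈ alternatingGroup (Fin 4) := by
    rw [Equiv.Perm.mem_alternatingGroup]; decide
  have hv₁mem : v₁ ∈ alternatingGroup (Fin 4) := by
    rw [Equiv.Perm.mem_alternatingGroup]; decide
  have hv₂mem : v₂ ∈ alternatingGroup (Fin 4) := by
    rw [Equiv.Perm.mem_alternatingGroup]; decide
  set g₁ : alternatingGroup (Fin 4) := ⟨r₁, hr₁mem⟩ with hg₁def
  set g₂ : alternatingGroup (Fin 4) := ⟨r₂, hr₂mem⟩ with hg₂def
  have hg₁3 : g₁ ^ 3 = 1 := by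
    apply Subtype.ext
    show r₁ ^ 3 = 1
    decide
  have hg₂3 : g₂ ^ 3 = 1 := by
    apply Subtype.ext
    show r₂ ^ 3 = 1
    decide
  -- the Sylow 3-subgroups generated by g₁ and g₂
  have cardzp : ∀ (g : alternatingGroup (Fin 4)), g ^ 3 = 1 → g ≠ 1 →
      Nat.card (Subgroup.map i (Subgroup.zpowers g)) = 3 ^ (Nat.card G).factorization 3 := by
    intro g h3 h1
    rw [hfact24, pow_one,
      ← Nat.card_congr (Subgroup.equivMapOfInjective (Subgroup.zpowers g) i hi).toEquiv,
      Nat.card_zpowers, orderOf_eq_prime h3 h1]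
  have hg₁1 : g₁ ≠ 1 := by
    intro h
    have : r₁ = 1 := congrArg Subtype.val h
    revert this; decide
  have hg₂1 : g₂ ≠ 1 := by
    intro h
    have : r₂ = 1 := congrArg Subtype.val h
    revert this; decide
  set P₁ : Sylow 3 G := Sylow.ofCard _ (cardzp g₁ hg₁3 hg₁1) with hP₁def
  set P₂ : Sylow 3 G := Sylow.ofCard _ (cardzp g₂ hg₂3 hg₂1) with hP₂def
  have hP₁coe : (P₁ : Subgroup G) = Subgroup.map i (Subgroup.zpowers g₁) := rfl
  have hP₂coe : (P₂ : Subgroup G) = Subgroup.map i (Subgroup.zpowers g₂) := rfl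
  -- the conjugation action on Sylow 3-subgroups
  set φ := MulAction.toPermHom G (Sylow 3 G) with hφdef
  -- Claim A : the kernel of φ meets the image of A4 trivially
  have claimA : ∀ x : G, x ∈ φ.ker → x ∈ i.range → x = 1 := by
    rintro x hxK ⟨a, rfl⟩
    have hconj : ∀ (g : alternatingGroup (Fin 4)) (P : Sylow 3 G),
        (P : Subgroup G) = Subgroup.map i (Subgroup.zpowers g) →
        a * g * a⁻¹ ∈ Subgroup.zpowers g := by
      intro g P hP
      have hfix : i a • P = P := by
        have h1 : φ (i a) = 1 := hxK
        have := congrArg (fun (σ : Equiv.Perm (Sylow 3 G)) => σ P) h1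
        exact this
      have hsub : (MulAut.conj (i a)) • (P : Subgroup G) = (P : Subgroup G) := by
        conv_rhs => rw [← hfix]
        rw [Sylow.smul_def]
        rfl
      have hmem : i g ∈ (P : Subgroup G) := by
        rw [hP]; exact ⟨g, Subgroup.mem_zpowers g, rfl⟩
      have : (MulAut.conj (i a)) (i g) ∈ (MulAut.conj (i a)) • (P : Subgroup G) :=
        Subgroup.smul_mem_pointwise_smul _ _ _ hmem
      rw [hsub, hP] at this
      obtain ⟨y, hy, hyeq⟩ := this
      have : i y = i (a * g * a⁻¹) := by
        rw [hyeq]; simp [MulAut.conj_apply, map_mul, map_inv]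
      exact hi this ▸ hy
    have c1 := mem_zpowers_cases hg₁3 (hconj g₁ P₁ hP₁coe)
    have c2 := mem_zpowers_cases hg₂3 (hconj g₂ P₂ hP₂coe)
    have hsign : Equiv.Perm.sign (a : Equiv.Perm (Fin 4)) = 1 :=
      (Equiv.Perm.mem_alternatingGroup).mp a.2
    have c1' : (a : Perm (Fin 4)) * r₁ * (a : Perm (Fin 4))⁻¹ = 1 ∨
        (a : Perm (Fin 4)) * r₁ * (a : Perm (Fin 4))⁻¹ = r₁ ∨
        (a : Perm (Fin 4)) * r₁ * (a : Perm (Fin 4))⁻¹ = r₁ ^ 2 := by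
      rcases c1 with h | h | h
      · left; have := congrArg Subtype.val h; simpa [hg₁def] using this
      · right; left; have := congrArg Subtype.val h; simpa [hg₁def] using this
      · right; right; have := congrArg Subtype.val h; simpa [hg₁def] using this
    have c2' : (a : Perm (Fin 4)) * r₂ * (a : Perm (Fin 4))⁻¹ = 1 ∨
        (a : Perm (Fin 4)) * r₂ * (a : Perm (Fin 4))⁻¹ = r₂ ∨
        (a : Perm (Fin 4)) * r₂ * (a : Perm (Fin 4))⁻¹ = r₂ ^ 2 := by
      rcases c2 with h | h | h
      · left; have := congrArg Subtype.val h; simpa [hg₂def] using this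
      · right; left; have := congrArg Subtype.val h; simpa [hg₂def] using this
      · right; right; have := congrArg Subtype.val h; simpa [hg₂def] using this
    have ha : (a : Perm (Fin 4)) = 1 := keyA _ hsign c1' c2'
    have : a = 1 := Subtype.ext (by simpa using ha)
    rw [this, map_one]
  -- the number of Sylow 3-subgroups is 4
  have cardP₁ : Nat.card (P₁ : Subgroup G) = 3 := by
    rw [hP₁coe, cardzp g₁ hg₁3 hg₁1, hfact24, pow_one]
  have hindex : (P₁ : Subgroup G).index = 8 := by
    have h := Subgroup.card_mul_index (P₁ : Subgroup G)
    rw [cardP₁, cardG] at h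
    omega
  have hne1 : Nat.card (Sylow 3 G) ≠ 1 := by
    intro h1
    have hsub : Subsingleton (Sylow 3 G) := (Nat.card_eq_one_iff_unique.mp h1).1
    have : P₁ = P₂ := Subsingleton.elim _ _
    have hco : Subgroup.map i (Subgroup.zpowers g₁) = Subgroup.map i (Subgroup.zpowers g₂) := by
      rw [← hP₁coe, ← hP₂coe, this]
    have : i g₁ ∈ Subgroup.map i (Subgroup.zpowers g₂) := by
      rw [← hco]; exact ⟨g₁, Subgroup.mem_zpowers g₁, rfl⟩
    obtain ⟨y, hy, hyeq⟩ := this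
    have hyg : y = g₁ := hi hyeq
    rw [hyg] at hy
    have := mem_zpowers_cases hg₂3 hy
    have hr : r₁ = 1 ∨ r₁ = r₂ ∨ r₁ = r₂ ^ 2 := by
      rcases this with h | h | h
      · left; have := congrArg Subtype.val h; simpa [hg₁def, hg₂def] using this
      · right; left; have := congrArg Subtype.val h; simpa [hg₁def, hg₂def] using this
      · right; right; have := congrArg Subtype.val h; simpa [hg₁def, hg₂def] using this
    revert hr; decide
  have hcards : Nat.card (Sylow 3 G) = 4 := by
    have h1 : Nat.card (Sylow 3 G) % 3 = 1 % 3 := card_sylow_modEq_one 3 G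
    have h2 : Nat.card (Sylow 3 G) ∣ 8 := hindex ▸ Sylow.card_dvd_index P₁
    have key : ∀ n : ℕ, n % 3 = 1 % 3 → n ∣ 8 → n ≠ 1 → n = 4 := by
      intro n h1' h2' h3'
      have h4 : n ≤ 8 := Nat.le_of_dvd (by norm_num) h2'
      interval_cases n <;> omega
    exact key _ h1 h2 hne1
  by_cases hK : φ.ker = ⊥
  · -- injective case : G ≅ Perm (Fin 4)
    have hinj : Function.Injective φ := (MonoidHom.ker_eq_bot_iff φ).mp hK
    have : Fintype G := Fintype.ofFinite G
    have : Fintype (Sylow 3 G) := Fintype.ofFinite _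
    have hc4 : Fintype.card (Sylow 3 G) = 4 := by
      rw [← Nat.card_eq_fintype_card]; exact hcards
    have hcperm : Fintype.card (Equiv.Perm (Sylow 3 G)) = 24 := by
      rw [Fintype.card_perm, hc4]; norm_num [Nat.factorial]
    have hcG : Fintype.card G = 24 := by rw [← Nat.card_eq_fintype_card]; exact cardG
    have hbij : Function.Bijective φ :=
      (Fintype.bijective_iff_injective_and_card φ).mpr ⟨hinj, by rw [hcG, hcperm]⟩
    let e : Sylow 3 G ≃ Fin 4 := Fintype.equivFinOfCardEq hc4
    refine ⟨(MulEquiv.ofBijective φ hbij).trans ⟨Equiv.permCongr e, ?_⟩⟩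
    intro p q
    ext x
    simp [Equiv.permCongr_apply, Equiv.Perm.mul_apply]
  · -- otherwise we exhibit a Z2 × Z2 × Z2 subgroup, contradiction
    exfalso
    rw [Subgroup.eq_bot_iff_forall] at hK
    push_neg at hK
    obtain ⟨k, hkK, hk1⟩ := hK
    have hkN : k ∉ i.range := fun h => hk1 (claimA k hkK h)
    have hπk : π k ≠ 1 := by
      intro h
      exact hkN (hexact ▸ MonoidHom.mem_ker.mpr h)
    have hsq2 : ∀ u : Multiplicative (ZMod 2), u ^ 2 = 1 := by decide
    have huv : ∀ u v : Multiplicative (ZMod 2), u ≠ 1 → v ≠ 1 → u = v := by decide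
    have hk2 : k ^ 2 = 1 := by
      have : k ^ 2 ∈ i.range := by
        rw [hexact, MonoidHom.mem_ker, map_pow]
        exact hsq2 (π k)
      exact claimA _ (pow_mem hkK 2) this
    have huniq : ∀ x : G, x ∈ φ.ker → x ∉ i.range → x = k := by
      intro x hxK hxN
      have hπx : π x ≠ 1 := fun h => hxN (hexact ▸ MonoidHom.mem_ker.mpr h)
      have : x * k⁻¹ ∈ i.range := by
        rw [hexact, MonoidHom.mem_ker, map_mul, map_inv, huv _ _ hπx hπk, mul_inv_cancel]
      have := claimA _ (mul_mem hxK (inv_mem hkK)) this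
      rw [mul_inv_eq_one] at this
      exact this
    have hcentral : ∀ g : G, Commute g k := by
      intro g
      have h1 : g * k * g⁻¹ ∈ φ.ker := (MonoidHom.normal_ker φ).conj_mem k hkK g
      have h2 : g * k * g⁻¹ ∉ i.range := by
        intro h
        rw [hexact, MonoidHom.mem_ker, map_mul, map_mul, map_inv,
          mul_comm (π g) (π k), mul_assoc, mul_inv_cancel, mul_one] at h
        exact hπk h
      have hgk : g * k * g⁻¹ = k := huniq _ h1 h2
      show g * k = k * g
      calc g * k = (g * k * g⁻¹) * g := by group
      _ = k * g := by rw [hgk]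
    -- the Klein four involutions in the image of A4
    set w₁ : G := i ⟨v₁, hv₁mem⟩ with hw₁def
    set w₂ : G := i ⟨v₂, hv₂mem⟩ with hw₂def
    have hw₁2 : w₁ ^ 2 = 1 := by
      rw [hw₁def, ← map_pow, show (⟨v₁, hv₁mem⟩ : alternatingGroup (Fin 4)) ^ 2 = 1 by
        apply Subtype.ext; show v₁ ^ 2 = 1; decide, map_one]
    have hw₂2 : w₂ ^ 2 = 1 := by
      rw [hw₂def, ← map_pow, show (⟨v₂, hv₂mem⟩ : alternatingGroup (Fin 4)) ^ 2 = 1 by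
        apply Subtype.ext; show v₂ ^ 2 = 1; decide, map_one]
    have hw12 : Commute w₁ w₂ := by
      show w₁ * w₂ = w₂ * w₁
      rw [hw₁def, hw₂def, ← map_mul, ← map_mul]
      apply congrArg
      apply Subtype.ext; show v₁ * v₂ = v₂ * v₁; decide
    -- assembling the homomorphism from Z2 × Z2 × Z2
    have comm23 : ∀ m n : Multiplicative (ZMod 2),
        Commute (homOfInvolution w₂ hw₂2 m) (homOfInvolution k hk2 n) := fun m n =>
      (hcentral w₂).pow_pow _ _
    have comm1i : ∀ (m : Multiplicative (ZMod 2)) (n : Multiplicative (ZMod 2 × ZMod 2)),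
        Commute (homOfInvolution w₁ hw₁2 m)
          (((MonoidHom.noncommCoprod (homOfInvolution w₂ hw₂2) (homOfInvolution k hk2)
            comm23).comp (MulEquiv.prodMultiplicative (ZMod 2) (ZMod 2)).toMonoidHom) n) := fun m n =>
      Commute.mul_right (hw12.pow_pow _ _) ((hcentral w₁).pow_pow _ _)
    obtain ⟨f, hfapply⟩ : ∃ f : Multiplicative (ZMod 2 × ZMod 2 × ZMod 2) →* G,
        ∀ y : ZMod 2 × ZMod 2 × ZMod 2,
          f (Multiplicative.ofAdd y) = w₁ ^ y.1.val * (w₂ ^ y.2.1.val * k ^ y.2.2.val) :=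
      ⟨(MonoidHom.noncommCoprod (homOfInvolution w₁ hw₁2)
          ((MonoidHom.noncommCoprod (homOfInvolution w₂ hw₂2) (homOfInvolution k hk2)
            comm23).comp (MulEquiv.prodMultiplicative (ZMod 2) (ZMod 2)).toMonoidHom) comm1i).comp
          (MulEquiv.prodMultiplicative (ZMod 2) (ZMod 2 × ZMod 2)).toMonoidHom,
        fun y => rfl⟩
    have hz2 : ∀ z : ZMod 2, z = 0 ∨ z = 1 := by decide
    have hval0 : (0 : ZMod 2).val = 0 := rfl
    have hval1 : (1 : ZMod 2).val = 1 := rfl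
    have hw₁mem : w₁ ∈ i.range := ⟨_, rfl⟩
    have hw₂mem : w₂ ∈ i.range := ⟨_, rfl⟩
    have hfinj : Function.Injective f := by
      rw [injective_iff_map_eq_one]
      intro x hx
      obtain ⟨⟨a, b, c⟩, rfl⟩ : ∃ y : ZMod 2 × ZMod 2 × ZMod 2, Multiplicative.ofAdd y = x :=
        ⟨Multiplicative.toAdd x, rfl⟩
      rw [hfapply] at hx
      rcases hz2 c with rfl | rfl
      · rw [hval0, pow_zero, mul_one] at hx
        rcases hz2 a with rfl | rfl <;> rcases hz2 b with rfl | rfl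
        · rfl
        · exfalso
          rw [hval0, hval1, pow_zero, pow_one, one_mul] at hx
          have h1 : (⟨v₂, hv₂mem⟩ : alternatingGroup (Fin 4)) = 1 := hi (by rw [map_one]; exact hx)
          have h2 : v₂ = 1 := congrArg Subtype.val h1
          revert h2; decide
        · exfalso
          rw [hval0, hval1, pow_zero, pow_one, mul_one] at hx
          have h1 : (⟨v₁, hv₁mem⟩ : alternatingGroup (Fin 4)) = 1 := hi (by rw [map_one]; exact hx)
          have h2 : v₁ = 1 := congrArg Subtype.val h1
          revert h2; decide
        · exfalso
          rw [hval1, pow_one, pow_one, hw₁def, hw₂def, ← map_mul] at hx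
          have h1 : (⟨v₁, hv₁mem⟩ * ⟨v₂, hv₂mem⟩ : alternatingGroup (Fin 4)) = 1 :=
            hi (by rw [map_one]; exact hx)
          have h2 : v₁ * v₂ = 1 := congrArg Subtype.val h1
          revert h2; decide
      · exfalso
        rw [hval1, pow_one] at hx
        have hkeq : k = (w₂ ^ b.val)⁻¹ * ((w₁ ^ a.val)⁻¹ *
            (w₁ ^ a.val * (w₂ ^ b.val * k))) := by group
        rw [hx] at hkeq
        have hkmem : k ∈ i.range := by
          rw [hkeq]
          exact mul_mem (inv_mem (pow_mem hw₂mem _))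
            (mul_mem (inv_mem (pow_mem hw₁mem _)) (one_mem _))
        exact hkN hkmem
    exact hno ⟨f.range, ⟨(MonoidHom.ofInjective hfinj).symm⟩⟩
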